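/- arXiv:2103.14509 — 2 statements merged into one kernel-verified Lean document; each statement's English description precedes it below -/
import Mathlib

section
/- Let n and m be natural numbers with 1 ≤ m ≤ n, and let a be a partition of n with exactly m nonzero parts. If a minimizes the sum of squares of its parts among all partitions of n with exactly m nonzero parts, then the difference between any two (nonzero) parts of a is at most 1. -/
/-- Sum of squares of the parts of a partition (given as a multiset). -/
def sqSum (a : Multiset ℕ) : ℕ := (a.map fun x => x ^ 2).sum

/-- Forward direction of Lemma 3.9: a sum-of-squares-minimizing partition of `n`
with exactly `m` nonzero parts has all parts within `1` of each other. -/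
theorem stmt_0 (n m : ℕ) (hm : 1 ≤ m) (hmn : m ≤ n) (a : Multiset ℕ)
    (hcard : Multiset.card a = m) (hpos : ∀ x ∈ a, 0 < x) (hsum : a.sum = n)
    (hmin : ∀ b : Multiset ℕ, Multiset.card b = m → (∀ x ∈ b, 0 < x) →
      b.sum = n → sqSum a ≤ sqSum b) :
    ∀ x ∈ a, ∀ y ∈ a, x ≤ y + 1 := by
  intro x hx y hy
  by_contra h
  push_neg at h
  have hxy : x ≠ y := by omega
  have hy' : y ∈ a.erase x := (Multiset.mem_erase_of_ne (fun e => hxy e.symm)).mpr hy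
  set c := (a.erase x).erase y with hc
  have ha : a = x ::ₘ y ::ₘ c := by
    rw [hc, Multiset.cons_erase hy', Multiset.cons_erase hx]
  obtain ⟨z, hz⟩ : ∃ z, x = z + y + 2 := ⟨x - y - 2, by omega⟩
  set b := (x - 1) ::ₘ (y + 1) ::ₘ c with hb
  have hcmem : ∀ w ∈ c, w ∈ a := fun w hw =>
    Multiset.mem_of_mem_erase (Multiset.mem_of_mem_erase hw)
  have key := hmin b
    (by rw [hb]; rw [ha] at hcard; simpa using hcard)
    (by
      intro w hw
      rw [hb] at hw
      rcases Multiset.mem_cons.mp hw with rfl | hw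
      · omega
      rcases Multiset.mem_cons.mp hw with rfl | hw
      · omega
      · exact hpos w (hcmem w hw))
    (by
      rw [hb, Multiset.sum_cons, Multiset.sum_cons]
      rw [ha, Multiset.sum_cons, Multiset.sum_cons] at hsum
      omega)
  rw [hb, ha] at key
  simp only [sqSum, Multiset.map_cons, Multiset.sum_cons] at key
  rw [hz] at key
  have hx1 : z + y + 2 - 1 = z + y + 1 := by omega
  rw [hx1] at key
  nlinarith [key]
end

section
/- Let n and m be natural numbers with 1 ≤ m ≤ n, and let a be a partition of n with exactly m nonzero parts such that the difference between any two (nonzero) parts of a is at most 1. Then a minimizes the sum of squares of its parts among all partitions of n with exactly m nonzero parts: for every partition b of n with exactly m nonzero parts, ‖a‖² ≤ ‖b‖². -/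
lemma balanced_eq (n m : ℕ) (hm : 1 ≤ m) (a : Multiset ℕ)
    (hcard : Multiset.card a = m) (hsum : a.sum = n)
    (hdiff : ∀ x ∈ a, ∀ y ∈ a, x ≤ y + 1) :
    a = Multiset.replicate (n % m) (n / m + 1) + Multiset.replicate (m - n % m) (n / m) := by
  have hane : a ≠ 0 := by
    intro h; subst h; simp at hcard; omega
  have hfne : a.toFinset.Nonempty := by
    obtain ⟨x, hx⟩ := Multiset.exists_mem_of_ne_zero hane
    exact ⟨x, Multiset.mem_toFinset.2 hx⟩
  set t := a.toFinset.min' hfne with htdef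
  have ht : t ∈ a := Multiset.mem_toFinset.1 (a.toFinset.min'_mem hfne)
  have hle : ∀ x ∈ a, t ≤ x := fun x hx =>
    a.toFinset.min'_le x (Multiset.mem_toFinset.2 hx)
  have hdich : ∀ x ∈ a, x = t ∨ x = t + 1 := by
    intro x hx
    have h1 := hle x hx
    have h2 := hdiff x hx t ht
    omega
  set r := a.count (t + 1) with hrdef
  set c := a.count t with hcdef
  have hstep : a = Multiset.replicate r (t + 1) + Multiset.replicate c t := by
    ext v
    rw [Multiset.count_add, Multiset.count_replicate, Multiset.count_replicate]
    by_cases h1 : v = t + 1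
    · subst h1
      rw [if_pos rfl, if_neg (by omega)]
      omega
    · by_cases h2 : v = t
      · subst h2
        rw [if_neg (by omega), if_pos rfl]
        omega
      · rw [if_neg (by omega), if_neg (by omega), Multiset.count_eq_zero_of_notMem]
        intro hv
        rcases hdich v hv with h | h <;> omega
  have hcards : r + c = m := by
    have := congrArg Multiset.card hstep
    simp [Multiset.card_replicate] at this
    omega
  have hsums : n = m * t + r := by
    have := congrArg Multiset.sum hstep
    rw [hsum, Multiset.sum_add, Multiset.sum_replicate, Multiset.sum_replicate,
      smul_eq_mul, smul_eq_mul] at this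
    nlinarith [this, hcards]
  have hc1 : 1 ≤ c := Multiset.count_pos.2 ht
  have hrm : r < m := by omega
  have hmod : n % m = r := by
    rw [hsums, Nat.mul_add_mod, Nat.mod_eq_of_lt hrm]
  have hdiv : n / m = t := by
    rw [hsums, Nat.mul_add_div (by omega), Nat.div_eq_of_lt hrm, add_zero]
  rw [hmod, hdiv]
  have : m - r = c := by omega
  rw [this]
  exact hstep

/-- Converse direction of Lemma 3.9: a partition of `n` with exactly `m` nonzero
parts, any two of which differ by at most `1`, minimizes the sum of squares. -/
theorem stmt_1 (n m : ℕ) (hm : 1 ≤ m) (hmn : m ≤ n) (a : Multiset ℕ)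
    (hcard : Multiset.card a = m) (hpos : ∀ x ∈ a, 0 < x) (hsum : a.sum = n)
    (hdiff : ∀ x ∈ a, ∀ y ∈ a, x ≤ y + 1) :
    ∀ b : Multiset ℕ, Multiset.card b = m → (∀ x ∈ b, 0 < x) → b.sum = n →
      sqSum a ≤ sqSum b := by
  suffices key : ∀ k b, Multiset.card b = m → b.sum = n → sqSum b = k →
      sqSum a ≤ sqSum b by
    intro b hc _ hs
    exact key _ b hc hs rfl
  intro k
  induction k using Nat.strong_induction_on with
  | _ k ih =>
    intro b hc hs hk
    by_cases hb : ∀ x ∈ b, ∀ y ∈ b, x ≤ y + 1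
    · rw [balanced_eq n m hm a hcard hsum hdiff, ← balanced_eq n m hm b hc hs hb]
    · push_neg at hb
      obtain ⟨x, hx, y, hy, hxy⟩ := hb
      have hyx : y ∈ b.erase x := Multiset.mem_erase_of_ne (by omega) |>.2 hy
      set s := (b.erase x).erase y with hsdef
      have hb' : b = x ::ₘ y ::ₘ s := by
        rw [hsdef, Multiset.cons_erase hyx, Multiset.cons_erase hx]
      set b' := (x - 1) ::ₘ (y + 1) ::ₘ s with hb'def
      have hcb : Multiset.card b' = m := by
        have h1 : Multiset.card b = Multiset.card s + 2 := by rw [hb']; simp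
        have h2 : Multiset.card b' = Multiset.card s + 2 := by rw [hb'def]; simp
        omega
      have hsb : b'.sum = n := by
        have h1 : b.sum = x + y + s.sum := by rw [hb']; simp [add_assoc]
        have h2 : b'.sum = (x - 1) + (y + 1) + s.sum := by rw [hb'def]; simp [add_assoc]
        omega
      have hsq1 : sqSum b = x ^ 2 + y ^ 2 + sqSum s := by
        rw [hb']; simp [sqSum, add_assoc]
      have hsq2 : sqSum b' = (x - 1) ^ 2 + (y + 1) ^ 2 + sqSum s := by
        rw [hb'def]; simp [sqSum, add_assoc]
      have hlt : sqSum b' < sqSum b := by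
        rw [hsq1, hsq2]
        have hx1 : x = (x - 1) + 1 := by omega
        set x' := x - 1
        have hx2 : y + 1 ≤ x' := by omega
        rw [hx1]
        nlinarith [hx2]
      have := ih (sqSum b') (by omega) b' hcb hsb rfl
      omega
end
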